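/- arXiv:2603.11934 — 4 statements merged into one kernel-verified Lean document; each statement's English description precedes it below -/
import Mathlib

section
/- Let n ≥ 1, k ≥ 2, 1 ≤ j ≤ n, and let x be a symbol with 1 ≤ x < k. If the string α = a₁a₂⋯a_{j−1} x k^{n−j} (i.e., a string of length n whose j-th symbol is x and whose last n−j symbols all equal k) is a necklace over the alphabet {1,…,k}, then the string a₁a₂⋯a_{j−1} (x+1) k^{n−j}, obtained by increasing the last non-k symbol by one, is also a necklace. -/
/-!
Cut the incremented string `β = u ++ v` and compare it with its rotation `v ++ u`; write `α`
for the original necklace.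

If the cut lies inside the prefix `a`, say `a = u ++ q` with `u ≠ []`, then `α ≤ v' ++ u` for the
corresponding rotation `v' = q ++ x :: k^m` of `α`. The first `|q| + 1` symbols of `α` and `β`
lie in `a`, so they agree, and they form a word `c` with `c ≤ q ++ [x] < q ++ [x + 1]`;
hence `β < v ++ u`.

If the cut lies inside the block `k^m`, the rotation starts with `k`. Being a necklace, `α` starts
with a symbol `≤ x < k`, so `β` starts with a symbol `< k` unless `a = []` and `x + 1 = k`,
in which case `β = k^n`.
-/

/-- `s` is a string over the alphabet `{1, 2, …, k}`. -/
def IsStr (k : ℕ) (s : List ℕ) : Prop := ∀ x ∈ s, 1 ≤ x ∧ x ≤ k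

/-- A necklace is a string that is lexicographically smallest among all of its rotations.
(Lists of naturals carry the lexicographic linear order, where a proper prefix is
smaller than any of its extensions.) -/
def IsNecklace (s : List ℕ) : Prop := ∀ i : ℕ, s ≤ s.rotate i

namespace List

variable {α : Type*} [LinearOrder α]

theorem append_lt_append_of_lt_of_length_eq {s w : List α} (s' w' : List α)
    (hlen : s.length = w.length) (h : s < w) : s ++ s' < w ++ w' := by
  induction s generalizing w with
  | nil =>
    obtain rfl : w = [] := length_eq_zero_iff.1 hlen.symm
    exact absurd h (lt_irrefl _)
  | cons a s ih =>
    obtain _ | ⟨b, w⟩ := w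
    · simp at hlen
    · rcases cons_lt_cons_iff.1 h with hab | ⟨rfl, hsw⟩
      · exact cons_lt_cons_iff.2 (Or.inl hab)
      · exact cons_lt_cons_iff.2 (Or.inr ⟨rfl, ih (by simpa using hlen) hsw⟩)

theorem le_of_append_le_append_of_length_eq {s w s' w' : List α}
    (hlen : s.length = w.length) (h : s ++ s' ≤ w ++ w') : s ≤ w :=
  le_of_not_gt fun hws => (append_lt_append_of_lt_of_length_eq w' s' hlen.symm hws).not_ge h

theorem lt_append_singleton_of_le {s q : List α} {x y : α} (hs : s ≤ q ++ [x]) (hxy : x < y) :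
    s < q ++ [y] :=
  hs.trans_lt (append_left_lt (cons_lt_cons_iff.2 (Or.inl hxy)))

theorem head_le_of_le {a b : α} {l l' : List α} (h : a :: l ≤ b :: l') : a ≤ b :=
  h.lt_or_eq.elim head_le_of_lt fun h => (cons.inj h).1.le

theorem append_append_cons_lt_of_le {p q t : List α} {x y : α} (hp : p ≠ []) (hxy : x < y)
    (h : p ++ q ++ x :: t ≤ q ++ x :: t ++ p) : p ++ q ++ y :: t < q ++ y :: t ++ p := by
  set c := (p ++ q).take (q.length + 1)
  set d := (p ++ q).drop (q.length + 1)
  have hcd : p ++ q = c ++ d := (take_append_drop _ _).symm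
  have hc : c.length = (q ++ [x]).length := by
    have := length_pos_iff.2 hp
    simp only [c, length_take, length_append, length_singleton]
    omega
  have hcx : c ≤ q ++ [x] :=
    le_of_append_le_append_of_length_eq (s' := d ++ x :: t) (w' := t ++ p) hc
      (by rw [hcd] at h; simpa using h)
  calc p ++ q ++ y :: t = c ++ (d ++ y :: t) := by rw [hcd, append_assoc]
    _ < (q ++ [y]) ++ (t ++ p) :=
      append_lt_append_of_lt_of_length_eq _ _ (by simpa using hc)
        (lt_append_singleton_of_le hcx hxy)
    _ = q ++ y :: t ++ p := by simp

end List

open List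

theorem isNecklace_iff_le_append_swap {s : List ℕ} :
    IsNecklace s ↔ ∀ u v, s = u ++ v → s ≤ v ++ u := by
  refine ⟨fun h u v huv => ?_, fun h i => ?_⟩
  · simpa [huv, rotate_append_length_eq] using h u.length
  · rw [rotate_eq_drop_append_take_mod]
    exact h _ _ (take_append_drop _ _).symm

theorem isNecklace_replicate (n c : ℕ) : IsNecklace (replicate n c) := fun i => by
  rw [rotate_replicate]

theorem IsNecklace.head_le_of_mem {b x : ℕ} {l : List ℕ} (h : IsNecklace (b :: l)) (hx : x ∈ l) :
    b ≤ x := by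
  obtain ⟨l₁, l₂, rfl⟩ := append_of_mem hx
  exact head_le_of_le (isNecklace_iff_le_append_swap.1 h (b :: l₁) (x :: l₂) rfl)

theorem IsNecklace.append_cons_le_swap_of_lt {p q t : List ℕ} {x y : ℕ}
    (h : IsNecklace (p ++ q ++ x :: t)) (hxy : x < y) :
    p ++ q ++ y :: t ≤ q ++ y :: t ++ p := by
  rcases eq_or_ne p [] with rfl | hp
  · simp
  · exact (append_append_cons_lt_of_le hp hxy
      (isNecklace_iff_le_append_swap.1 h p (q ++ x :: t) (by simp))).le

theorem increment_last_nonk_necklace_general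
    (k m x : ℕ) (a : List ℕ)
    (hxk : x < k)
    (hneck : IsNecklace (a ++ x :: List.replicate m k)) :
    IsNecklace (a ++ (x + 1) :: List.replicate m k) := by
  by_cases hdeg : a = [] ∧ x + 1 = k
  · obtain ⟨rfl, rfl⟩ := hdeg
    exact isNecklace_replicate (m + 1) (x + 1)
  have hlt_cons_k : ∀ w, a ++ (x + 1) :: replicate m k < k :: w := fun w => by
    obtain _ | ⟨b, a⟩ := a
    · exact cons_lt_cons_iff.2 (Or.inl (lt_of_le_of_ne hxk fun h => hdeg ⟨rfl, h⟩))
    · have hbx : b ≤ x := hneck.head_le_of_mem (by simp)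
      exact cons_lt_cons_iff.2 (Or.inl (by omega))
  have hcut : ∀ p q, a = p ++ q →
      a ++ (x + 1) :: replicate m k ≤ q ++ (x + 1) :: replicate m k ++ p := by
    rintro p q rfl
    exact hneck.append_cons_le_swap_of_lt (Nat.lt_succ_self x)
  refine isNecklace_iff_le_append_swap.2 fun u v huv => ?_
  rcases append_eq_append_iff.1 huv with ⟨_ | ⟨b, a'⟩, rfl, hv⟩ | ⟨c, rfl, rfl⟩
  · obtain rfl : v = (x + 1) :: replicate m k := by simpa using hv.symm
    simpa using hcut a [] (by simp)
  · obtain ⟨rfl, ht⟩ := cons_eq_cons.1 hv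
    obtain _ | ⟨c, v⟩ := v
    · simp [ht]
    · obtain rfl : c = k := eq_of_mem_replicate (show c ∈ replicate m k by simp [ht])
      exact (hlt_cons_k _).le
  · exact hcut u c rfl

/-- Property 1: if `α = a₁⋯a_{j-1} x k^{n-j}` is a necklace over `{1,…,k}` with `x < k`,
then increasing the last non-`k` symbol by one again yields a necklace. -/
theorem increment_last_nonk_necklace
    (k n j m x : ℕ) (a : List ℕ)
    (hn : 1 ≤ n) (hk : 2 ≤ k) (hj1 : 1 ≤ j) (hjn : j ≤ n)
    (ha : a.length = j - 1) (hm : m = n - j)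
    (hx1 : 1 ≤ x) (hxk : x < k)
    (hstr : IsStr k (a ++ x :: List.replicate m k))
    (hneck : IsNecklace (a ++ x :: List.replicate m k)) :
    IsNecklace (a ++ (x + 1) :: List.replicate m k) :=
  increment_last_nonk_necklace_general k m x a hxk hneck
end

section
/- Let n, k > 1 and w < kn, and let α and β be necklaces in S_k(n,w↑) that are consecutive in lexicographic order (i.e., α < β and no necklace in S_k(n,w↑) lies strictly between α and β). If α is periodic, then α is a prefix of the concatenation ap(α)·ap(β); moreover β is aperiodic. -/
/-- `listPow t j` is `j` copies of `t` concatenated. -/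
def listPow (t : List ℕ) : ℕ → List ℕ
  | 0 => []
  | j + 1 => t ++ listPow t j

/-- `t` is the aperiodic prefix of `s`: the shortest string some power of which is `s`. -/
def IsApOf (t s : List ℕ) : Prop :=
  (∃ j, 1 ≤ j ∧ s = listPow t j) ∧
  ∀ u m, 1 ≤ m → s = listPow u m → t.length ≤ u.length

/-- `s` is aperiodic: its aperiodic prefix is `s` itself. -/
def ListAperiodic (s : List ℕ) : Prop := IsApOf s s

/-! Write `α = a ^ d` with `a = ap(α)` and `d ≥ 2`, and let `γ = a ^ (d - 1) ++ k ^ |a|`, i.e. `α`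
with its last period raised to the top letter. Then `γ` is a necklace of `S_k(n, w↑)` above `α`:
a rotation of `γ` dominates the same rotation of the necklace `α` letterwise, and when that
rotation of `α` agrees with `α` on the first `(d - 1)|a|` letters it rotates the aperiodic `a` onto
itself, i.e. it is a rotation by a multiple of `|a|`, which moves the block `k ^ |a|` forward.
By consecutiveness `β ≤ γ`, so `β` starts with `a ^ (d - 1)` and `α = a ^ d` is a prefix of
`a ++ β`. Finally, if `β = u ^ j` with `j ≥ 2`, then `|u| ≤ (d - 1)|a|` lies inside the common
prefix of `α` and `β`, and shifting `α` by `|u|` moves the first difference of `α` and `β` to the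
left, giving a rotation of `α` below `α`. -/

namespace List

theorem forall₂_replicate_of_forall {X Y : Type*} {R : Y → X → Prop} {l : List Y} {b : X}
    (h : ∀ x ∈ l, R x b) : Forall₂ R l (replicate l.length b) := by
  induction l with
  | nil => exact .nil
  | cons a l ih => exact .cons (h a (by simp)) (ih fun x hx => h x (by simp [hx]))

theorem Forall₂.rotate {X Y : Type*} {R : X → Y → Prop} {l₁ : List X} {l₂ : List Y}
    (h : Forall₂ R l₁ l₂) (n : ℕ) : Forall₂ R (l₁.rotate n) (l₂.rotate n) := by
  rw [rotate_eq_drop_append_take_mod, rotate_eq_drop_append_take_mod, ← h.length_eq]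
  exact rel_append (forall₂_drop _ h) (forall₂_take _ h)

variable {X : Type*} [LinearOrder X] {l₁ l₂ : List X}

theorem le_of_forall₂_le (h : Forall₂ (· ≤ ·) l₁ l₂) : l₁ ≤ l₂ := by
  induction h with
  | nil => exact le_rfl
  | @cons a b _ _ hab _ ih =>
    rcases hab.lt_or_eq with hab | rfl
    · exact le_of_lt (cons_lt_cons_iff.2 (Or.inl hab))
    · exact cons_le_cons a ih

theorem lt_of_take_lt {m : ℕ} (h : l₁.take m < l₂.take m) : l₁ < l₂ := by
  induction m generalizing l₁ l₂ with
  | zero => simp at h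
  | succ m ih =>
    cases l₁ with
    | nil => cases l₂ <;> simp_all
    | cons a l₁ =>
      cases l₂ with
      | nil => simp at h
      | cons b l₂ =>
        simp only [take_succ_cons] at h
        rw [cons_lt_cons_iff] at h ⊢
        exact h.imp_right (And.imp_right (ih ·))

theorem take_le_take_of_le (h : l₁ ≤ l₂) (m : ℕ) : l₁.take m ≤ l₂.take m :=
  not_lt.1 fun h' => not_lt.2 h (lt_of_take_lt h')

theorem append_lt_append_of_lt (h : l₁ < l₂) (hlen : l₁.length = l₂.length) (s t : List X) :
    l₁ ++ s < l₂ ++ t :=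
  lt_of_take_lt (m := l₁.length) (by rwa [take_left, hlen, take_left])

theorem exists_append_cons_of_lt (h : l₁ < l₂) (hlen : l₁.length = l₂.length) :
    ∃ P x y S R, l₁ = P ++ x :: S ∧ l₂ = P ++ y :: R ∧ x < y := by
  induction l₁ generalizing l₂ with
  | nil => cases l₂ <;> simp_all
  | cons a l₁ ih =>
    cases l₂ with
    | nil => simp at h
    | cons b l₂ =>
      rcases cons_lt_cons_iff.1 h with hab | ⟨rfl, hl⟩
      · exact ⟨[], a, b, l₁, l₂, rfl, rfl, hab⟩
      · obtain ⟨P, x, y, S, R, rfl, rfl, hxy⟩ := ih hl (by simpa using hlen)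
        exact ⟨a :: P, x, y, S, R, rfl, rfl, hxy⟩

theorem ne_replicate_of_lt {b : X} (hlt : l₁ < l₂) (hlen : l₁.length = l₂.length)
    (hb : ∀ x ∈ l₂, x ≤ b) : l₁ ≠ replicate l₁.length b := by
  intro h
  rw [h, hlen] at hlt
  exact (le_of_forall₂_le (forall₂_replicate_of_forall hb)).not_gt hlt

theorem rotate_lt_self_of_lt_of_rotate_eq {q : ℕ} (hq : 0 < q) (hlt : l₁ < l₂)
    (hlen : l₁.length = l₂.length) (hrot : l₂.rotate q = l₂) (htake : l₁.take q = l₂.take q) :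
    l₁.rotate q < l₁ := by
  obtain ⟨P, x, y, S, R, rfl, rfl, hxy⟩ := exists_append_cons_of_lt hlt hlen
  have hqP : q ≤ P.length := by
    by_contra! h
    obtain ⟨r, hr⟩ : ∃ r, q - P.length = r + 1 := ⟨q - P.length - 1, by omega⟩
    simp [take_append, hr, take_of_length_le h.le, hxy.ne] at htake
  obtain ⟨t, P', rfl, ht⟩ : ∃ t P', P = t ++ P' ∧ t.length = q :=
    ⟨P.take q, P.drop q, (take_append_drop q P).symm, length_take_of_le hqP⟩
  have hrot' : (t ++ P' ++ y :: R).rotate q = P' ++ y :: (R ++ t) := by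
    rw [append_assoc, ← ht, rotate_append_length_eq]; simp
  obtain ⟨M, hM⟩ : P' ++ [y] <+: t ++ P' := by
    refine prefix_of_prefix_length_le (l₃ := t ++ P' ++ y :: R) ?_ (prefix_append _ _)
      (by simp only [length_append, length_cons, length_nil]; omega)
    rw [← hrot, hrot']
    exact ⟨R ++ t, by simp⟩
  calc (t ++ P' ++ x :: S).rotate q = P' ++ x :: (S ++ t) := by
        rw [append_assoc, ← ht, rotate_append_length_eq]; simp
    _ < P' ++ y :: (M ++ x :: S) := append_left_lt (cons_lt_cons_iff.2 (Or.inl hxy))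
    _ = t ++ P' ++ x :: S := by rw [← hM]; simp

end List

open List

section listPow

variable (t : List ℕ)

theorem listPow_succ (j : ℕ) : listPow t (j + 1) = t ++ listPow t j := rfl

theorem length_listPow (j : ℕ) : (listPow t j).length = j * t.length := by
  induction j with
  | zero => simp [listPow]
  | succ j ih => rw [listPow_succ, length_append, ih, Nat.succ_mul, Nat.add_comm]

theorem listPow_add (i j : ℕ) : listPow t (i + j) = listPow t i ++ listPow t j := by
  induction i with
  | zero => simp [listPow]
  | succ i ih => rw [Nat.add_right_comm, listPow_succ, listPow_succ, ih, append_assoc]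

theorem listPow_one : listPow t 1 = t := append_nil t

theorem listPow_succ' (j : ℕ) : listPow t (j + 1) = listPow t j ++ t := by
  rw [listPow_add, listPow_one]

theorem listPow_mul (i j : ℕ) : listPow t (i * j) = listPow (listPow t i) j := by
  induction j with
  | zero => rfl
  | succ j ih => rw [Nat.mul_succ, Nat.add_comm, listPow_add, ih, listPow_succ]

variable {t} in
theorem mem_of_mem_listPow {x : ℕ} {j : ℕ} (hx : x ∈ listPow t j) : x ∈ t := by
  induction j with
  | zero => simp [listPow] at hx
  | succ j ih => exact (mem_append.1 hx).elim id ih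

theorem take_listPow_append (l : List ℕ) (j : ℕ) :
    (listPow t j ++ l).take (j * t.length) = listPow t j := by
  rw [← length_listPow, take_left]

theorem take_length_listPow {j : ℕ} (hj : 1 ≤ j) : (listPow t j).take t.length = t := by
  obtain ⟨j, rfl⟩ : ∃ i, j = i + 1 := ⟨j - 1, by omega⟩
  exact take_left

theorem listPow_rotate_length (j : ℕ) : (listPow t j).rotate t.length = listPow t j := by
  cases j with
  | zero => rfl
  | succ j => rw [listPow_succ, rotate_append_length_eq, ← listPow_succ', listPow_succ]

theorem listPow_rotate_mod (j i : ℕ) :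
    (listPow t j).rotate (i % t.length) = (listPow t j).rotate i := by
  have hmul : ∀ c, (listPow t j).rotate (c * t.length) = listPow t j := by
    intro c
    induction c with
    | zero => rw [Nat.zero_mul, rotate_zero]
    | succ c ih => rw [Nat.succ_mul, ← rotate_rotate, ih, listPow_rotate_length]
  conv_lhs => rw [← hmul (i / t.length), rotate_rotate, Nat.div_add_mod']

theorem append_listPow_append (u v : List ℕ) (j : ℕ) :
    u ++ listPow (v ++ u) j = listPow (u ++ v) j ++ u := by
  induction j with
  | zero => simp [listPow]
  | succ j ih => simp only [listPow_succ, append_assoc, ih]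

theorem listPow_rotate {r : ℕ} (hr : r ≤ t.length) (j : ℕ) :
    (listPow t j).rotate r = listPow (t.rotate r) j := by
  cases j with
  | zero => rfl
  | succ j =>
    obtain ⟨u, v, rfl, rfl⟩ : ∃ u v, t = u ++ v ∧ u.length = r :=
      ⟨t.take r, t.drop r, (take_append_drop r t).symm, length_take_of_le hr⟩
    rw [rotate_append_length_eq, listPow_succ, append_assoc, rotate_append_length_eq,
      append_assoc, ← append_listPow_append, listPow_succ, append_assoc]

end listPow

theorem exists_listPow_of_append_comm {u v : List ℕ} (h : u ++ v = v ++ u) :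
    ∃ w i j, u = listPow w i ∧ v = listPow w j := by
  induction hN : u.length + v.length using Nat.strong_induction_on generalizing u v with
  | _ N ih =>
  wlog huv : u.length ≤ v.length generalizing u v
  · obtain ⟨w, i, j, rfl, rfl⟩ := this h.symm (by omega) (by omega)
    exact ⟨w, j, i, rfl, rfl⟩
  rcases eq_or_ne u [] with rfl | hu
  · exact ⟨v, 0, 1, rfl, (listPow_one v).symm⟩
  obtain ⟨v', rfl⟩ : u <+: v :=
    prefix_of_prefix_length_le (prefix_append u v) (h ▸ prefix_append v u) huv
  have hcomm : u ++ v' = v' ++ u := by simpa using h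
  obtain ⟨w, i, j, rfl, rfl⟩ := ih _ (by simp [← hN, length_pos_iff.2 hu]) hcomm rfl
  exact ⟨w, i, i + j, rfl, (listPow_add w i j).symm⟩

theorem exists_isApOf (s : List ℕ) : ∃ t, IsApOf t s := by
  classical
  have hP : ∃ q, ∃ u : List ℕ, u.length = q ∧ ∃ m, 1 ≤ m ∧ s = listPow u m :=
    ⟨_, s, rfl, 1, le_rfl, (listPow_one s).symm⟩
  obtain ⟨t, ht, hpow⟩ := Nat.find_spec hP
  exact ⟨t, hpow, fun u m hm hs => ht ▸ Nat.find_min' hP ⟨u, rfl, m, hm, hs⟩⟩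

namespace IsApOf

variable {t t' s : List ℕ}

theorem isPrefix (h : IsApOf t s) : t <+: s := by
  obtain ⟨j, hj, rfl⟩ := h.1
  obtain ⟨j, rfl⟩ : ∃ i, j = i + 1 := ⟨j - 1, by omega⟩
  exact prefix_append _ _

theorem unique (h : IsApOf t s) (h' : IsApOf t' s) : t = t' := by
  obtain ⟨j, hj, hs⟩ := h.1
  obtain ⟨j', hj', hs'⟩ := h'.1
  have hlen : t.length = t'.length := le_antisymm (h.2 t' j' hj' hs') (h'.2 t j hj hs)
  exact (prefix_of_prefix_length_le h.isPrefix h'.isPrefix hlen.le).eq_of_length hlen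

theorem listAperiodic (h : IsApOf t s) : ListAperiodic t := by
  refine ⟨⟨1, le_rfl, (listPow_one t).symm⟩, fun u m hm ht => ?_⟩
  obtain ⟨j, hj, rfl⟩ := h.1
  exact h.2 u (m * j) (Nat.mul_pos hm hj) (by rw [ht, listPow_mul])

end IsApOf

namespace ListAperiodic

variable {a : List ℕ}

theorem rotate_ne (ha : ListAperiodic a) {r : ℕ} (hr0 : 0 < r) (hr : r < a.length) :
    a.rotate r ≠ a := by
  intro hrot
  obtain ⟨w, i, j, hu, hv⟩ : ∃ w i j, a.take r = listPow w i ∧ a.drop r = listPow w j := by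
    refine exists_listPow_of_append_comm ?_
    rw [take_append_drop, ← rotate_eq_drop_append_take hr.le, hrot]
  have ha' : a = listPow w (i + j) := by rw [listPow_add, ← hu, ← hv, take_append_drop]
  have hi := congrArg length hu
  have hj := congrArg length hv
  simp only [length_take, min_eq_left hr.le, length_drop, length_listPow] at hi hj
  have hi0 : 0 < i := Nat.pos_of_mul_pos_right (hi ▸ hr0)
  have hj0 : 0 < j * w.length := by omega
  have hw : w.length ≤ i * w.length := Nat.le_mul_of_pos_left _ hi0
  have hmin := ha.2 w (i + j) (by omega) ha'
  rw [ha', length_listPow, Nat.add_mul] at hmin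
  omega

theorem dvd_of_take_rotate_listPow (ha : ListAperiodic a) (ha0 : a ≠ []) {d i : ℕ} (hd : 1 ≤ d)
    (h : ((listPow a d).rotate i).take a.length = a) : a.length ∣ i := by
  have hp := length_pos_iff.2 ha0
  have hb := take_length_listPow (a.rotate (i % a.length)) hd
  rw [length_rotate] at hb
  rw [← listPow_rotate_mod, listPow_rotate _ (Nat.mod_lt _ hp).le, hb] at h
  by_contra hi
  exact ha.rotate_ne (Nat.pos_of_ne_zero (mt Nat.dvd_of_mod_eq_zero hi)) (Nat.mod_lt _ hp) h

end ListAperiodic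

section Padding

variable {a : List ℕ} {e k : ℕ}

theorem isStr_listPow_append_replicate (h : IsStr k (listPow a (e + 1)))
    (ha : a ≠ []) : IsStr k (listPow a e ++ replicate a.length k) := by
  have hsub : ∀ y ∈ a, 1 ≤ y ∧ y ≤ k := fun y hy => h y (mem_append_left _ hy)
  intro x hx
  rcases mem_append.1 hx with hx | hx
  · exact hsub x (mem_of_mem_listPow hx)
  · obtain ⟨y, hy⟩ := exists_mem_of_ne_nil a ha
    rw [eq_of_mem_replicate hx]
    exact ⟨(hsub y hy).1.trans (hsub y hy).2, le_rfl⟩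

theorem forall₂_le_listPow_append_replicate (hle : ∀ x ∈ a, x ≤ k) :
    Forall₂ (· ≤ ·) (listPow a (e + 1)) (listPow a e ++ replicate a.length k) := by
  rw [listPow_succ']
  exact rel_append (forall₂_refl _) (forall₂_replicate_of_forall hle)

theorem listPow_lt_listPow_append_replicate (hle : ∀ x ∈ a, x ≤ k)
    (hne : a ≠ replicate a.length k) :
    listPow a (e + 1) < listPow a e ++ replicate a.length k := by
  refine lt_of_le_of_ne (le_of_forall₂_le (forall₂_le_listPow_append_replicate hle)) fun h => hne ?_
  rw [listPow_succ'] at h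
  exact append_cancel_left h

theorem listPow_append_lt_rotate {b : List ℕ} (hab : a < b) (hlen : a.length = b.length)
    {c : ℕ} (hc : 1 ≤ c) (hce : c ≤ e) :
    listPow a e ++ b < (listPow a e ++ b).rotate (c * a.length) := by
  obtain ⟨f, rfl⟩ : ∃ f, e = f + c := ⟨e - c, by omega⟩
  obtain ⟨c, rfl⟩ : ∃ c', c = c' + 1 := ⟨c - 1, by omega⟩
  calc listPow a (f + (c + 1)) ++ b = listPow a f ++ (a ++ (listPow a c ++ b)) := by
        rw [listPow_add, listPow_succ, append_assoc, append_assoc]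
    _ < listPow a f ++ (b ++ listPow a (c + 1)) :=
        append_left_lt (append_lt_append_of_lt hab hlen _ _)
    _ = (listPow a (f + (c + 1)) ++ b).rotate ((c + 1) * a.length) := by
        rw [Nat.add_comm f, listPow_add a (c + 1) f, append_assoc, ← length_listPow,
          rotate_append_length_eq, append_assoc]

theorem isNecklace_listPow_append_replicate (he : 1 ≤ e) (ha : ListAperiodic a)
    (hneck : IsNecklace (listPow a (e + 1))) (hle : ∀ x ∈ a, x ≤ k)
    (hne : a ≠ replicate a.length k) :
    IsNecklace (listPow a e ++ replicate a.length k) := by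
  have hprefix : (listPow a e ++ replicate a.length k).take (e * a.length) =
      (listPow a (e + 1)).take (e * a.length) := by
    rw [listPow_succ', take_listPow_append, take_listPow_append]
  intro i
  by_cases hi : ((listPow a (e + 1)).rotate i).take (e * a.length) =
      (listPow a (e + 1)).take (e * a.length)
  · have ha0 : a ≠ [] := by rintro rfl; exact hne rfl
    have htake := congrArg (take a.length) hi
    rw [take_take, take_take, min_eq_left (Nat.le_mul_of_pos_left _ he),
      take_length_listPow _ (by omega)] at htake
    obtain ⟨c, rfl⟩ := ha.dvd_of_take_rotate_listPow ha0 (by omega) htake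
    rw [← rotate_mod, length_append, length_listPow, length_replicate, ← Nat.succ_mul,
      Nat.mul_comm a.length, Nat.mul_mod_mul_right]
    rcases Nat.eq_zero_or_pos (c % (e + 1)) with hc | hc
    · rw [hc, Nat.zero_mul, rotate_zero]
    · refine le_of_lt (listPow_append_lt_rotate ?_ (length_replicate).symm hc
        (Nat.lt_succ_iff.1 (Nat.mod_lt _ (by omega))))
      exact lt_of_le_of_ne (le_of_forall₂_le (forall₂_replicate_of_forall hle)) hne
  · refine le_of_lt (lt_of_take_lt (m := e * a.length) ?_)
    calc (listPow a e ++ replicate a.length k).take (e * a.length)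
        = (listPow a (e + 1)).take (e * a.length) := hprefix
      _ < ((listPow a (e + 1)).rotate i).take (e * a.length) :=
        lt_of_le_of_ne (take_le_take_of_le (hneck i) _) (Ne.symm hi)
      _ ≤ ((listPow a e ++ replicate a.length k).rotate i).take (e * a.length) :=
        le_of_forall₂_le (forall₂_take _ ((forall₂_le_listPow_append_replicate hle).rotate i))

theorem take_eq_listPow_of_between {β : List ℕ} (hlt : listPow a (e + 1) < β)
    (hle : β ≤ listPow a e ++ replicate a.length k) : β.take (e * a.length) = listPow a e := by
  have h1 := take_le_take_of_le (le_of_lt hlt) (e * a.length)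
  have h2 := take_le_take_of_le hle (e * a.length)
  rw [listPow_succ', take_listPow_append] at h1
  rw [take_listPow_append] at h2
  exact le_antisymm h2 h1

end Padding

theorem listAperiodic_of_lt_of_take_eq {α β : List ℕ} {m : ℕ} (hneck : IsNecklace α)
    (hlt : α < β) (hlen : α.length = β.length) (hm : β.length ≤ 2 * m)
    (htake : α.take m = β.take m) : ListAperiodic β := by
  refine ⟨⟨1, le_rfl, (listPow_one β).symm⟩, fun u j hj hβ => ?_⟩
  by_contra! hshort
  rw [hβ, length_listPow] at hshort hm
  have hj2 : 2 ≤ j := by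
    by_contra! hj2
    obtain rfl : j = 1 := by omega
    omega
  have hu0 : 0 < u.length := Nat.pos_of_ne_zero fun hu => by simp [hu] at hshort
  have hum : u.length ≤ m := by
    have := Nat.mul_le_mul_right u.length hj2
    omega
  have hrot : β.rotate u.length = β := by rw [hβ, listPow_rotate_length]
  have htake' : α.take u.length = β.take u.length := by
    have := congrArg (take u.length) htake
    rwa [take_take, take_take, min_eq_left hum] at this
  exact (hneck u.length).not_gt (rotate_lt_self_of_lt_of_rotate_eq hu0 hlt hlen hrot htake')

theorem periodic_necklace_prefix_of_ap_concat_general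
    (n k w : ℕ)
    (α β : List ℕ)
    (hα : IsStr k α ∧ α.length = n ∧ w ≤ α.sum ∧ IsNecklace α)
    (hβ : IsStr k β ∧ β.length = n ∧ w ≤ β.sum ∧ IsNecklace β)
    (hlt : α < β)
    (hconsec : ∀ γ : List ℕ, IsStr k γ → γ.length = n → w ≤ γ.sum → IsNecklace γ →
      ¬(α < γ ∧ γ < β))
    (hper : ¬ ListAperiodic α) :
    (∀ tα tβ : List ℕ, IsApOf tα α → IsApOf tβ β → α <+: (tα ++ tβ)) ∧
    ListAperiodic β := by
  obtain ⟨hαk, rfl, hαw, hαneck⟩ := hα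
  obtain ⟨hβk, hβn, -, -⟩ := hβ
  obtain ⟨a, hapα⟩ := exists_isApOf α
  obtain ⟨d, hd, rfl⟩ := hapα.1
  obtain ⟨e, rfl⟩ : ∃ e, d = e + 1 := ⟨d - 1, by omega⟩
  have he : 1 ≤ e := Nat.one_le_iff_ne_zero.2 fun he => hper (by
    subst he
    rwa [Nat.zero_add, listPow_one] at hapα ⊢)
  have hak : ∀ x ∈ a, x ≤ k := fun x hx => (hαk x (mem_append_left _ hx)).2
  have hne : a ≠ replicate a.length k := fun ha =>
    ne_replicate_of_lt hlt hβn.symm (fun x hx => (hβk x hx).2)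
      (eq_replicate_iff.2 ⟨rfl, fun x hx => eq_of_mem_replicate (ha ▸ mem_of_mem_listPow hx)⟩)
  have ha0 : a ≠ [] := by rintro rfl; exact hne rfl
  have hpoint := forall₂_le_listPow_append_replicate (e := e) hak
  have hβγ : β ≤ listPow a e ++ replicate a.length k := not_lt.1 fun hγβ =>
    hconsec _ (isStr_listPow_append_replicate hαk ha0) hpoint.length_eq.symm
      (hαw.trans hpoint.sum_le_sum)
      (isNecklace_listPow_append_replicate he hapα.listAperiodic hαneck hak hne)
      ⟨listPow_lt_listPow_append_replicate hak hne, hγβ⟩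
  have htake := take_eq_listPow_of_between hlt hβγ
  have hβap : ListAperiodic β := listAperiodic_of_lt_of_take_eq (m := e * a.length) hαneck hlt
    hβn.symm (by rw [hβn, length_listPow]; nlinarith)
    (by rw [htake, listPow_succ', take_listPow_append])
  refine ⟨fun tα tβ htα htβ => ?_, hβap⟩
  rw [← hapα.unique htα, ← IsApOf.unique hβap htβ, ← take_append_drop (e * a.length) β, htake,
    ← append_assoc, ← listPow_succ]
  exact prefix_append _ _

/-- Property 4: if `α` and `β` are consecutive necklaces of `S_k(n,w↑)` in lexicographic
order and `α` is periodic, then `α` is a prefix of `ap(α)·ap(β)`, and `β` is aperiodic. -/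
theorem periodic_necklace_prefix_of_ap_concat
    (n k w : ℕ) (hn : 1 < n) (hk : 1 < k) (hw : w < k * n)
    (α β : List ℕ)
    (hα : IsStr k α ∧ α.length = n ∧ w ≤ α.sum ∧ IsNecklace α)
    (hβ : IsStr k β ∧ β.length = n ∧ w ≤ β.sum ∧ IsNecklace β)
    (hlt : α < β)
    (hconsec : ∀ γ : List ℕ, IsStr k γ → γ.length = n → w ≤ γ.sum → IsNecklace γ →
      ¬(α < γ ∧ γ < β))
    (hper : ¬ ListAperiodic α) :
    (∀ tα tβ : List ℕ, IsApOf tα α → IsApOf tβ β → α <+: (tα ++ tβ)) ∧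
    ListAperiodic β :=
  periodic_necklace_prefix_of_ap_concat_general n k w α β hα hβ hlt hconsec hper
end

section
/- Let α = a₁a₂⋯a_n be a necklace over the alphabet {1,…,k}, let 1 ≤ i ≤ j ≤ n, and let x be a symbol with x > a_j. Then the string a_i a_{i+1} ⋯ a_{j−1} x (of length j−i+1) is lexicographically larger than α. -/
theorem List.append_cons_lt_append_singleton {α : Type*} [LinearOrder α] (t u : List α)
    {b x : α} (h : b < x) : t ++ b :: u < t ++ [x] :=
  List.append_left_lt (List.cons_lt_cons_iff.2 (Or.inl h))

theorem List.rotate_eq_take_drop_append_getElem_cons {α : Type*} (l : List α) {p q : ℕ}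
    (hpq : p ≤ q) (hq : q < l.length) :
    l.rotate p = (l.drop p).take (q - p) ++ l[q] :: (l.drop (q + 1) ++ l.take p) := by
  rw [List.rotate_eq_drop_append_take (by omega)]
  nth_rw 1 [← List.take_append_drop (q - p) (l.drop p)]
  rw [List.drop_drop, Nat.add_sub_cancel' hpq, List.drop_eq_getElem_cons hq, List.append_assoc,
    List.cons_append]

theorem IsNecklace.lt_take_drop_append_singleton {s : List ℕ} (hs : IsNecklace s) {p q x : ℕ}
    (hpq : p ≤ q) (hq : q < s.length) (hx : s[q] < x) :
    s < (s.drop p).take (q - p) ++ [x] :=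
  lt_of_le_of_lt ((hs p).trans_eq (s.rotate_eq_take_drop_append_getElem_cons hpq hq))
    (List.append_cons_lt_append_singleton _ _ hx)

theorem necklace_substring_larger_general
    (n : ℕ) (α : List ℕ)
    (hlen : α.length = n) (hneck : IsNecklace α)
    (i j x : ℕ) (hi : 1 ≤ i) (hij : i ≤ j) (hjn : j ≤ n)
    (hx : α.getD (j - 1) 0 < x) :
    α < (α.drop (i - 1)).take (j - i) ++ [x] := by
  have hj : j - 1 < α.length := by omega
  have hlt := hneck.lt_take_drop_append_singleton (Nat.sub_le_sub_right hij 1) hj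
    (x := x) (by rwa [← List.getD_eq_getElem α 0 hj])
  rwa [show j - 1 - (i - 1) = j - i by omega] at hlt

/-- Property 5: if `α = a₁a₂⋯a_n` is a necklace, `1 ≤ i ≤ j ≤ n`, and `x > a_j`, then the
string `a_i a_{i+1} ⋯ a_{j-1} x` is lexicographically larger than `α`.
(Here `a_j` is accessed 0-based as `α.getD (j-1) 0`, and the substring
`a_i ⋯ a_{j-1}` is `(α.drop (i-1)).take (j-i)`.) -/
theorem necklace_substring_larger
    (n k : ℕ) (hn : 1 ≤ n) (α : List ℕ)
    (hstr : IsStr k α) (hlen : α.length = n) (hneck : IsNecklace α)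
    (i j x : ℕ) (hi : 1 ≤ i) (hij : i ≤ j) (hjn : j ≤ n)
    (hx : α.getD (j - 1) 0 < x) :
    α < (α.drop (i - 1)).take (j - i) ++ [x] :=
  necklace_substring_larger_general n α hlen hneck i j x hi hij hjn hx
end

section
/- Fix a necklace α = a₁a₂⋯a_n over {1,…,k} with n, k > 1. For integers 0 ≤ j ≤ t ≤ n and any integer w, let P(t,j,w) denote the number of length-t strings over {1,…,k} that have weight exactly w, have prefix a₁a₂⋯a_j, and in which every non-empty suffix is lexicographically greater than α. Then: (i) P(0,0,0) = 1; (ii) P(t,j,w) = 0 whenever j = t > 0 or w ≤ 0 (except P(0,0,0) = 1); and (iii) for 0 ≤ j < t and w > 0, P(t,j,w) = P(t,j+1,w) + Σ_{x=a_{j+1}+1}^{k} P(t−j−1, 0, w − wt(a₁⋯a_j) − x). -/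
/-- `P(t,j,w)`, relative to a fixed necklace `α` over `{1,…,k}`: the number of length-`t`
strings over `{1,…,k}` with weight exactly `w`, prefix `a₁⋯a_j`, and in which every
non-empty suffix is lexicographically greater than `α`. -/
noncomputable def Pcount (k : ℕ) (α : List ℕ) (t j : ℕ) (w : ℤ) : ℕ :=
  {s : List ℕ | IsStr k s ∧ s.length = t ∧ (s.sum : ℤ) = w ∧ α.take j <+: s ∧
    ∀ suf : List ℕ, suf ≠ [] → suf <:+ s → α < suf}.ncard

/-! Sort the strings counted by `P(t,j,w)` by their letter `b` in position `j + 1`. Applied to the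
whole string, the suffix condition forces `b ≥ a_{j+1}`, and the strings with `b = a_{j+1}` are
exactly those counted by `P(t,j+1,w)`. If `b > a_{j+1}`, a suffix of `a₁⋯a_j b r` starting inside
`a₁⋯a_j b` begins with `a_{i+1}⋯a_j b`, while the rotation of `α` by `i` begins with
`a_{i+1}⋯a_j a_{j+1}`; as `α` is at most its rotations, that suffix exceeds `α`. So only the
suffixes of `r` matter, and `r` ranges over the strings counted by
`P(t-j-1, 0, w - wt(a₁⋯a_j) - b)`. The vanishing cases hold because a prefix of `α` cannot exceed
`α` and a string over `{1,…,k}` weighs at least its length. -/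

theorem Set.ncard_eq_sum_ncard_fiber {α β : Type*} {S : Set α} (hS : S.Finite) {f : α → β}
    {T : Finset β} (hf : ∀ s ∈ S, f s ∈ T) :
    S.ncard = ∑ b ∈ T, {s ∈ S | f s = b}.ncard := by
  classical
  lift S to Finset α using hS
  rw [Set.ncard_coe_finset, Finset.card_eq_sum_card_fiberwise hf]
  refine Finset.sum_congr rfl fun b _ => ?_
  rw [← Set.ncard_coe_finset, Finset.coe_filter]
  rfl

theorem isStr_append {k : ℕ} {p s : List ℕ} : IsStr k (p ++ s) ↔ IsStr k p ∧ IsStr k s :=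
  List.forall_mem_append

theorem isStr_cons {k x : ℕ} {s : List ℕ} : IsStr k (x :: s) ↔ (1 ≤ x ∧ x ≤ k) ∧ IsStr k s :=
  List.forall_mem_cons

theorem IsStr.length_le_sum {k : ℕ} {s : List ℕ} (h : IsStr k s) : s.length ≤ s.sum :=
  s.length_le_sum_of_one_le fun x hx => (h x hx).1

theorem finite_setOf_isStr_length (k t : ℕ) : {s | IsStr k s ∧ s.length = t}.Finite := by
  refine ((List.finite_length_eq (Fin (k + 1)) t).image (List.map Fin.val)).subset ?_
  rintro s ⟨hs, rfl⟩
  refine ⟨s.map (Fin.ofNat (k + 1)), List.length_map _, ?_⟩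
  rw [List.map_map]
  conv_rhs => rw [← List.map_id s]
  exact List.map_congr_left fun x hx => Nat.mod_eq_of_lt (Nat.lt_succ_of_le (hs x hx).2)

theorem IsNecklace.lt_take_drop_append_cons {α : List ℕ} (h : IsNecklace α) {i m x : ℕ}
    (him : i + m < α.length) (hx : α[i + m] < x) (r : List ℕ) :
    α < (α.drop i).take m ++ x :: r :=
  calc α ≤ α.rotate i := h i
    _ = (α.drop i).take m ++ α[i + m] :: (α.drop (i + m + 1) ++ α.take i) := by
      rw [List.rotate_eq_drop_append_take (by omega)]
      conv_lhs => rw [← List.take_append_drop m (α.drop i)]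
      rw [List.drop_drop, List.drop_eq_getElem_cons him, List.append_assoc, List.cons_append]
    _ < (α.drop i).take m ++ x :: r := List.append_left_lt (List.cons_lt_cons_iff.2 (.inl hx))

def SuffixesGt {β : Type*} [LT β] (α s : List β) : Prop := ∀ suf, suf ≠ [] → suf <:+ s → α < suf

namespace SuffixesGt

variable {β : Type*} [LT β] {α s : List β}

theorem lt (h : SuffixesGt α s) (hs : s ≠ []) : α < s := h s hs List.suffix_rfl

theorem of_append {p : List β} (h : SuffixesGt α (p ++ s)) : SuffixesGt α s :=
  fun suf hne hsuf => h suf hne (hsuf.trans (List.suffix_append p s))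

theorem cons_iff {a : β} : SuffixesGt α (a :: s) ↔ α < a :: s ∧ SuffixesGt α s := by
  refine ⟨fun h => ⟨h.lt (List.cons_ne_nil a s), of_append (p := [a]) h⟩, ?_⟩
  rintro ⟨hlt, hs⟩ suf hne hsuf
  rcases List.suffix_cons_iff.1 hsuf with rfl | hsuf
  exacts [hlt, hs suf hne hsuf]

end SuffixesGt

theorem IsNecklace.suffixesGt_take_append_cons {α : List ℕ} (h : IsNecklace α) {j x : ℕ}
    (hj : j < α.length) (hx : α[j] < x) {r : List ℕ} (hr : SuffixesGt α r) :
    SuffixesGt α (α.take j ++ x :: r) := by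
  suffices key : ∀ m i, i + m = j → SuffixesGt α ((α.drop i).take m ++ x :: r) by
    simpa using key j 0 (zero_add j)
  intro m
  induction m with
  | zero =>
    rintro i rfl
    exact SuffixesGt.cons_iff.2 ⟨h.lt_take_drop_append_cons hj hx r, hr⟩
  | succ m ih =>
    rintro i rfl
    have hcons : (α.drop i).take (m + 1) = α[i] :: (α.drop (i + 1)).take m := by
      rw [List.drop_eq_getElem_cons (by omega), List.take_succ_cons]
    rw [hcons, List.cons_append, SuffixesGt.cons_iff, ← List.cons_append, ← hcons]
    exact ⟨h.lt_take_drop_append_cons hj hx r, ih (i + 1) (by omega)⟩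

def pcountSet (k : ℕ) (α : List ℕ) (t j : ℕ) (w : ℤ) : Set (List ℕ) :=
  {s | IsStr k s ∧ s.length = t ∧ (s.sum : ℤ) = w ∧ α.take j <+: s ∧ SuffixesGt α s}

theorem pcount_eq_ncard (k : ℕ) (α : List ℕ) (t j : ℕ) (w : ℤ) :
    Pcount k α t j w = (pcountSet k α t j w).ncard := rfl

section pcountSet

variable {k : ℕ} {α : List ℕ} {t j : ℕ} {w : ℤ}

theorem pcountSet_zero_zero_zero : pcountSet k α 0 0 0 = {[]} := by
  ext s
  simp only [pcountSet, Set.mem_ofPred_eq, Set.mem_singleton_iff, List.length_eq_zero_iff]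
  refine ⟨fun h => h.2.1, ?_⟩
  rintro rfl
  exact ⟨fun _ h => absurd h List.not_mem_nil, rfl, rfl, List.nil_prefix,
    fun _ hne hsuf => absurd (List.suffix_nil.1 hsuf) hne⟩

theorem pcountSet_finite : (pcountSet k α t j w).Finite :=
  (finite_setOf_isStr_length k t).subset fun _ hs => ⟨hs.1, hs.2.1⟩

theorem pcountSet_eq_empty_of_lt (h : w < t) : pcountSet k α t j w = ∅ := by
  refine Set.eq_empty_of_forall_notMem fun s ⟨hs, hlen, hsum, _⟩ => ?_
  have := hs.length_le_sum
  omega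

theorem pcountSet_self_eq_empty (ht : 0 < t) (htα : t ≤ α.length) : pcountSet k α t t w = ∅ := by
  refine Set.eq_empty_of_forall_notMem fun s ⟨_, hlen, _, hpre, hsuf⟩ => ?_
  have hs : α.take t = s := hpre.eq_of_length (by simp [hlen]; omega)
  have hne : s ≠ [] := List.ne_nil_of_length_pos (hlen ▸ ht)
  exact List.lt_irrefl s (List.lt_of_le_of_lt (hs ▸ (List.take_prefix t α).le) (hsuf.lt hne))

theorem getD_take_append_cons (hj : j ≤ α.length) (x : ℕ) (r : List ℕ) :
    (α.take j ++ x :: r).getD j 0 = x := by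
  simp [List.getD_eq_getElem?_getD, hj]

theorem exists_eq_take_append_cons_of_mem_pcountSet {s : List ℕ} (hs : s ∈ pcountSet k α t j w)
    (hjt : j < t) (hj : j ≤ α.length) : ∃ b r, s = α.take j ++ b :: r := by
  obtain ⟨_ | ⟨b, r⟩, rfl⟩ := hs.2.2.2.1
  · have := hs.2.1
    simp at this
    omega
  · exact ⟨b, r, rfl⟩

theorem getElem_le_of_take_append_cons_mem_pcountSet {b : ℕ} {r : List ℕ}
    (hs : α.take j ++ b :: r ∈ pcountSet k α t j w) (hj : j < α.length) : α[j] ≤ b := by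
  by_contra! hb
  have hα : α = α.take j ++ α[j] :: α.drop (j + 1) := by
    rw [← List.drop_eq_getElem_cons hj, List.take_append_drop]
  have hlt : α.take j ++ b :: r < α := by
    conv_rhs => rw [hα]
    exact List.append_left_lt (List.cons_lt_cons_iff.2 (.inl hb))
  exact List.lt_asymm hlt (hs.2.2.2.2.lt (by simp))

theorem getD_mem_Icc_of_mem_pcountSet {s : List ℕ} (hs : s ∈ pcountSet k α t j w)
    (hj : j < α.length) (hjt : j < t) : s.getD j 0 ∈ Finset.Icc α[j] k := by
  obtain ⟨b, r, rfl⟩ := exists_eq_take_append_cons_of_mem_pcountSet hs hjt hj.le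
  rw [getD_take_append_cons hj.le, Finset.mem_Icc]
  exact ⟨getElem_le_of_take_append_cons_mem_pcountSet hs hj, (isStr_cons.1 (isStr_append.1 hs.1).2).1.2⟩

theorem take_append_cons_mem_pcountSet_iff (hstr : IsStr k α) (hneck : IsNecklace α)
    (hj : j < α.length) (hjt : j < t) {x : ℕ} (hx : α[j] < x) (hxk : x ≤ k) {r : List ℕ} :
    α.take j ++ x :: r ∈ pcountSet k α t j w ↔
      r ∈ pcountSet k α (t - j - 1) 0 (w - (α.take j).sum - x) := by
  have htake : IsStr k (α.take j) := fun y hy => hstr y (List.mem_of_mem_take hy)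
  have hlen : (α.take j).length = j := List.length_take_of_le hj.le
  constructor
  · rintro ⟨hs, hlen', hsum, -, hsuf⟩
    simp only [List.length_append, List.length_cons, hlen] at hlen'
    simp only [List.sum_append, List.sum_cons, Nat.cast_add] at hsum
    exact ⟨(isStr_cons.1 (isStr_append.1 hs).2).2, by omega, by omega, List.nil_prefix,
      SuffixesGt.of_append (p := [x]) hsuf.of_append⟩
  · rintro ⟨hr, hlen', hsum, -, hsuf⟩
    refine ⟨isStr_append.2 ⟨htake, isStr_cons.2 ⟨⟨by omega, hxk⟩, hr⟩⟩, ?_, ?_,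
      List.prefix_append _ _, hneck.suffixesGt_take_append_cons hj hx hsuf⟩
    · simp only [List.length_append, List.length_cons, hlen]
      omega
    · simp only [List.sum_append, List.sum_cons, Nat.cast_add]
      omega

theorem setOf_mem_pcountSet_getD_eq_getElem (hj : j < α.length) (hjt : j < t) :
    {s ∈ pcountSet k α t j w | s.getD j 0 = α[j]} = pcountSet k α t (j + 1) w := by
  ext s
  constructor
  · rintro ⟨hs, hsj⟩
    obtain ⟨b, r, rfl⟩ := exists_eq_take_append_cons_of_mem_pcountSet hs hjt hj.le
    rw [getD_take_append_cons hj.le] at hsj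
    subst hsj
    refine ⟨hs.1, hs.2.1, hs.2.2.1, ⟨r, ?_⟩, hs.2.2.2.2⟩
    rw [List.take_succ_eq_append_getElem hj, List.append_assoc, List.singleton_append]
  · rintro ⟨hstr, hlen, hsum, hpre, hsuf⟩
    rw [List.take_succ_eq_append_getElem hj] at hpre
    obtain ⟨u, rfl⟩ := hpre
    rw [List.append_assoc] at hstr hlen hsum hsuf ⊢
    exact ⟨⟨hstr, hlen, hsum, List.prefix_append _ _, hsuf⟩, getD_take_append_cons hj.le _ _⟩

theorem setOf_mem_pcountSet_getD_eq (hstr : IsStr k α) (hneck : IsNecklace α)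
    (hj : j < α.length) (hjt : j < t) {x : ℕ} (hx : α[j] < x) (hxk : x ≤ k) :
    {s ∈ pcountSet k α t j w | s.getD j 0 = x} =
      (α.take j ++ x :: ·) '' pcountSet k α (t - j - 1) 0 (w - (α.take j).sum - x) := by
  ext s
  constructor
  · rintro ⟨hs, hsx⟩
    obtain ⟨b, r, rfl⟩ := exists_eq_take_append_cons_of_mem_pcountSet hs hjt hj.le
    rw [getD_take_append_cons hj.le] at hsx
    subst hsx
    exact ⟨r, (take_append_cons_mem_pcountSet_iff hstr hneck hj hjt hx hxk).1 hs, rfl⟩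
  · rintro ⟨r, hr, rfl⟩
    exact ⟨(take_append_cons_mem_pcountSet_iff hstr hneck hj hjt hx hxk).2 hr,
      getD_take_append_cons hj.le _ _⟩

-- Positions are 0-based: `α[j]` is the paper's `a_{j+1}`.
theorem pcount_eq_pcount_succ_add_sum (hstr : IsStr k α) (hneck : IsNecklace α)
    (hj : j < α.length) (hjt : j < t) :
    Pcount k α t j w = Pcount k α t (j + 1) w +
      ∑ x ∈ Finset.Icc (α[j] + 1) k, Pcount k α (t - j - 1) 0 (w - (α.take j).sum - x) := by
  have hjk : α[j] ≤ k := (hstr _ (List.getElem_mem hj)).2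
  rw [pcount_eq_ncard, Set.ncard_eq_sum_ncard_fiber pcountSet_finite
      fun s hs => getD_mem_Icc_of_mem_pcountSet hs hj hjt,
    Finset.Icc_eq_cons_Ioc hjk, Finset.sum_cons, setOf_mem_pcountSet_getD_eq_getElem hj hjt,
    ← Finset.Icc_add_one_left_eq_Ioc]
  congr 1
  refine Finset.sum_congr rfl fun x hx => ?_
  obtain ⟨hx, hxk⟩ := Finset.mem_Icc.1 hx
  rw [setOf_mem_pcountSet_getD_eq hstr hneck hj hjt hx hxk,
    Set.ncard_image_of_injective _ fun _ _ h => List.cons_injective (List.append_cancel_left h),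
    pcount_eq_ncard]

end pcountSet

theorem Pcount_recurrence_general
    (n k : ℕ) (α : List ℕ)
    (hstr : IsStr k α) (hlen : α.length = n) (hneck : IsNecklace α) :
    -- (i)
    Pcount k α 0 0 0 = 1 ∧
    -- (ii)  `P(t,j,w) = 0` when `j = t > 0`, or when `w ≤ 0` except `P(0,0,0)`
    (∀ t : ℕ, 0 < t → t ≤ n → ∀ w : ℤ, Pcount k α t t w = 0) ∧
    (∀ t j : ℕ, j ≤ t → t ≤ n → ∀ w : ℤ, w ≤ 0 → ¬(t = 0 ∧ j = 0 ∧ w = 0) →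
      Pcount k α t j w = 0) ∧
    -- (iii)
    (∀ t j : ℕ, j < t → t ≤ n → ∀ w : ℤ, 0 < w →
      Pcount k α t j w = Pcount k α t (j + 1) w +
        ∑ x ∈ Finset.Icc (α.getD j 0 + 1) k,
          Pcount k α (t - j - 1) 0 (w - ((α.take j).sum : ℤ) - (x : ℤ))) := by
  refine ⟨?_, ?_, ?_, ?_⟩
  · rw [pcount_eq_ncard, pcountSet_zero_zero_zero, Set.ncard_singleton]
  · intro t ht htn w
    rw [pcount_eq_ncard, pcountSet_self_eq_empty ht (hlen ▸ htn), Set.ncard_empty]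
  · intro t j hjt _ w hw hne
    rw [pcount_eq_ncard, pcountSet_eq_empty_of_lt (by omega), Set.ncard_empty]
  · intro t j hjt htn w _
    have hj : j < α.length := by omega
    rw [List.getD_eq_getElem _ _ hj]
    exact pcount_eq_pcount_succ_add_sum hstr hneck hj hjt

/-- The recurrence for `P(t,j,w)` from Section 6.1. -/
theorem Pcount_recurrence
    (n k : ℕ) (hn : 1 < n) (hk : 1 < k) (α : List ℕ)
    (hstr : IsStr k α) (hlen : α.length = n) (hneck : IsNecklace α) :
    -- (i)
    Pcount k α 0 0 0 = 1 ∧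
    -- (ii)  `P(t,j,w) = 0` when `j = t > 0`, or when `w ≤ 0` except `P(0,0,0)`
    (∀ t : ℕ, 0 < t → t ≤ n → ∀ w : ℤ, Pcount k α t t w = 0) ∧
    (∀ t j : ℕ, j ≤ t → t ≤ n → ∀ w : ℤ, w ≤ 0 → ¬(t = 0 ∧ j = 0 ∧ w = 0) →
      Pcount k α t j w = 0) ∧
    -- (iii)
    (∀ t j : ℕ, j < t → t ≤ n → ∀ w : ℤ, 0 < w →
      Pcount k α t j w = Pcount k α t (j + 1) w +
        ∑ x ∈ Finset.Icc (α.getD j 0 + 1) k,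
          Pcount k α (t - j - 1) 0 (w - ((α.take j).sum : ℤ) - (x : ℤ))) :=
  Pcount_recurrence_general n k α hstr hlen hneck
end
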